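/- For every y with 0 < y < 2π and y ≠ π, the function G(y) = (4·tan(y/2)/cos²(y/2)) · ∫_{z=y/2}^{π/2} (π − z)·cos²(z) dz is differentiable at y, and 1 + G′(y) = −[(y² − 4πy + 3π² − 6)·cos(y) − 6·(y − 2π)·sin(y) − 2·(y² − 4πy + 3π² + 3)] / (8·cos⁴(y/2)). -/

import Mathlib

open Real

/-- The function whose derivative gives the Crofton area density. -/
noncomputable def croftonG (y : ℝ) : ℝ :=
  (4 * Real.tan (y / 2) / Real.cos (y / 2) ^ 2) *
    ∫ z in (y / 2)..(π / 2), (π - z) * Real.cos z ^ 2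

/-!
The integrand `(π - z) cos² z` has the elementary antiderivative `croftonAntideriv`, so `croftonG`
is an explicit elementary function away from the zeros of `cos (y / 2)`, differentiable by the
product and chain rules. After the half-angle substitutions `cos y = 2 cos² (y/2) - 1`,
`sin y = 2 sin (y/2) cos (y/2)` and `sin² = 1 - cos²`, the claimed formula for `1 + G'` becomes a
polynomial identity in `sin (y/2)`, `cos (y/2)`, `y` and `π`.
-/

noncomputable def croftonAntideriv (z : ℝ) : ℝ :=
  π * z / 2 - z ^ 2 / 4 + (π - z) * sin (2 * z) / 4 - cos (2 * z) / 8

lemma hasDerivAt_croftonAntideriv (z : ℝ) :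
    HasDerivAt croftonAntideriv ((π - z) * cos z ^ 2) z := by
  have h2z : HasDerivAt (fun z : ℝ => 2 * z) 2 z := by
    simpa using (hasDerivAt_id z).const_mul 2
  have hsin := (hasDerivAt_sin (2 * z)).comp z h2z
  have hcos := (hasDerivAt_cos (2 * z)).comp z h2z
  have hlin := (((hasDerivAt_id z).const_mul π).div_const 2).sub ((hasDerivAt_pow 2 z).div_const 4)
  have := (hlin.add ((((hasDerivAt_id z).const_sub π).mul hsin).div_const 4)).sub (hcos.div_const 8)
  refine this.congr_deriv ?_
  simp only [Function.comp_apply, id, cos_sq z]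
  push_cast
  ring

-- `3 * π ^ 2 / 16 + 1 / 8 = croftonAntideriv (π / 2)`
lemma integral_pi_sub_mul_cos_sq (a : ℝ) :
    ∫ z in a..(π / 2), (π - z) * cos z ^ 2 = 3 * π ^ 2 / 16 + 1 / 8 - croftonAntideriv a := by
  rw [intervalIntegral.integral_eq_sub_of_hasDerivAt (fun z _ => hasDerivAt_croftonAntideriv z)
    (by apply Continuous.intervalIntegrable; fun_prop)]
  simp only [croftonAntideriv, mul_div_cancel₀ π two_ne_zero, sin_pi, cos_pi]
  ring

lemma hasDerivAt_tan_div_cos_sq {x : ℝ} (hx : cos x ≠ 0) :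
    HasDerivAt (fun x => tan x / cos x ^ 2) ((3 - 2 * cos x ^ 2) / cos x ^ 4) x := by
  refine ((hasDerivAt_tan hx).div ((hasDerivAt_cos x).pow 2) (pow_ne_zero 2 hx)).congr_deriv ?_
  rw [Pi.pow_apply, tan_eq_sin_div_cos]
  field_simp
  linear_combination 2 * cos x * sin_sq_add_cos_sq x

lemma cos_half_ne_zero {y : ℝ} (h0 : 0 < y) (h1 : y < 2 * π) (h2 : y ≠ π) :
    cos (y / 2) ≠ 0 := by
  rcases h2.lt_or_gt with h | h
  · exact (cos_pos_of_mem_Ioo ⟨by linarith, by linarith⟩).ne'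
  · exact (cos_neg_of_pi_div_two_lt_of_lt (by linarith) (by linarith [pi_pos])).ne

lemma hasDerivAt_croftonG {y : ℝ} (hc : cos (y / 2) ≠ 0) :
    HasDerivAt croftonG (2 * (3 - 2 * cos (y / 2) ^ 2) / cos (y / 2) ^ 4 *
        (3 * π ^ 2 / 16 + 1 / 8 - croftonAntideriv (y / 2)) -
      2 * (π - y / 2) * tan (y / 2)) y := by
  have hhalf : HasDerivAt (fun y : ℝ => y / 2) (1 / 2) y := (hasDerivAt_id y).div_const 2
  have hfactor := ((hasDerivAt_tan_div_cos_sq hc).comp y hhalf).const_mul 4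
  have hintegral := ((hasDerivAt_croftonAntideriv (y / 2)).comp y hhalf).const_sub
    (3 * π ^ 2 / 16 + 1 / 8)
  have hG : croftonG = fun y => 4 * (tan (y / 2) / cos (y / 2) ^ 2) *
      (3 * π ^ 2 / 16 + 1 / 8 - croftonAntideriv (y / 2)) := by
    ext y
    rw [croftonG, integral_pi_sub_mul_cos_sq, mul_div_assoc]
  rw [hG]
  refine (hfactor.mul hintegral).congr_deriv ?_
  simp only [Function.comp_apply]
  field_simp
  ring

/-- Differentiating the closed form of the conditional area probability yields
the Crofton density of the area of a random spherical triangle. -/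
theorem crofton_density (y : ℝ) (h0 : 0 < y) (h1 : y < 2 * π) (h2 : y ≠ π) :
    DifferentiableAt ℝ croftonG y ∧
    1 + deriv croftonG y =
      -(((y ^ 2 - 4 * π * y + 3 * π ^ 2 - 6) * Real.cos y -
          6 * (y - 2 * π) * Real.sin y -
          2 * (y ^ 2 - 4 * π * y + 3 * π ^ 2 + 3)) /
        (8 * Real.cos (y / 2) ^ 4)) := by
  have hc := cos_half_ne_zero h0 h1 h2
  have hG := hasDerivAt_croftonG hc
  refine ⟨hG.differentiableAt, ?_⟩
  have hy : y = 2 * (y / 2) := by ring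
  rw [hG.deriv, croftonAntideriv, ← hy, tan_eq_sin_div_cos, hy, cos_two_mul, sin_two_mul, ← hy]
  field_simp
  ring
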